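/- arXiv:2009.10486 — 2 statements merged into one kernel-verified Lean document; each statement's English description precedes it below -/
import Mathlib

section
/- Let Σ = (G, σ) be a signed graph with diameter greater than n whose n-th power is unique. If the n-th power signed graph Σ^n = (G^n, σ′) is distance-compatible, then Σ is distance-compatible. -/
open SimpleGraph Polynomial

variable {V : Type*}

/-- The sign of a walk: the product of the signs of its edges. -/
def walkSign {G : SimpleGraph V} (sg : V → V → ℤ) {u v : V} (p : G.Walk u v) : ℤ :=
  (p.darts.map fun d => sg d.toProd.1 d.toProd.2).prod

/-- `sigmaMax G sg u v`: the maximum sign over all shortest `u`–`v` paths. -/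
noncomputable def sigmaMax (G : SimpleGraph V) (sg : V → V → ℤ) (u v : V) : ℤ := by
  classical
  exact if ∃ p : G.Walk u v, p.length = G.dist u v ∧ walkSign sg p = 1 then 1 else -1

/-- `sigmaMin G sg u v`: the minimum sign over all shortest `u`–`v` paths. -/
noncomputable def sigmaMin (G : SimpleGraph V) (sg : V → V → ℤ) (u v : V) : ℤ := by
  classical
  exact if ∃ p : G.Walk u v, p.length = G.dist u v ∧ walkSign sg p = -1 then -1 else 1

/-- `u` and `v` are distance-compatible: all shortest `u`–`v` paths have the same sign. -/
def pairCompatible (G : SimpleGraph V) (sg : V → V → ℤ) (u v : V) : Prop :=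
  ∀ p q : G.Walk u v, p.length = G.dist u v → q.length = G.dist u v →
    walkSign sg p = walkSign sg q

/-- The `n`-th power graph: `u ~ v` iff `u ≠ v` and `d(u,v) ≤ n`. -/
def powerGraph (G : SimpleGraph V) (n : ℕ) : SimpleGraph V where
  Adj u v := u ≠ v ∧ G.dist u v ≤ n
  symm := by
    constructor
    intro u v h
    exact ⟨h.1.symm, by rw [SimpleGraph.dist_comm]; exact h.2⟩
  loopless := by
    constructor
    intro u h
    exact h.1 rfl

/-- A signed graph is balanced if every cycle has positive sign. -/
def SBalanced (G : SimpleGraph V) (sg : V → V → ℤ) : Prop :=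
  ∀ ⦃u : V⦄ (p : G.Walk u u), p.IsCycle → walkSign sg p = 1

/-- 2-connectedness: at least 3 vertices and deleting any vertex leaves a connected graph. -/
def TwoConnected [Fintype V] (G : SimpleGraph V) : Prop :=
  3 ≤ Fintype.card V ∧ ∀ v : V, ((⊤ : G.Subgraph).deleteVerts {v}).coe.Connected

/-- Signature of the associated signed complete graph `K^{D^max}(Σ)`:
edges of `G` keep their sign, non-adjacent pairs get `sigmaMax`. -/
noncomputable def kSigMax (G : SimpleGraph V) (sg : V → V → ℤ) (u v : V) : ℤ := by
  classical
  exact if G.Adj u v then sg u v else sigmaMax G sg u v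

/-- Signature of the associated signed complete graph `K^{D^min}(Σ)`. -/
noncomputable def kSigMin (G : SimpleGraph V) (sg : V → V → ℤ) (u v : V) : ℤ := by
  classical
  exact if G.Adj u v then sg u v else sigmaMin G sg u v

/-!
A shortest `u`–`v` path of length `d` in `G` cuts into `⌈d/n⌉` consecutive shortest segments of
length at most `n`. Each segment is an edge of `G^n` whose `σ′`-sign is the sign of the segment,
because the power is unique; so the path becomes a `u`–`v` walk in `G^n` of length `⌈d/n⌉` with
the same sign. Since each step of a walk in `G^n` covers distance at most `n`, that walk is a
shortest one in `G^n`. Hence compatibility of `Σ^n` forces all shortest `u`–`v` paths of `Σ` to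
have the same sign.
-/

section

variable {G : SimpleGraph V} {sg : V → V → ℤ} {n : ℕ}

lemma walkSign_nil (u : V) : walkSign sg (Walk.nil : G.Walk u u) = 1 := rfl

lemma walkSign_cons {u w v : V} (h : G.Adj u w) (q : G.Walk w v) :
    walkSign sg (Walk.cons h q) = sg u w * walkSign sg q := by
  simp [walkSign]

lemma walkSign_take_mul_drop {u v : V} (p : G.Walk u v) (k : ℕ) :
    walkSign sg (p.take k) * walkSign sg (p.drop k) = walkSign sg p := by
  simp only [walkSign, Walk.darts_take, Walk.darts_drop, ← List.prod_append, ← List.map_append,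
    List.take_append_drop]

lemma walkSign_eq_one_or_neg_one (hval : ∀ u v, G.Adj u v → sg u v = 1 ∨ sg u v = -1)
    {u v : V} (p : G.Walk u v) : walkSign sg p = 1 ∨ walkSign sg p = -1 := by
  induction p with
  | nil => exact Or.inl rfl
  | cons h q ih =>
    rw [walkSign_cons]
    rcases hval _ _ h with h1 | h1 <;> rcases ih with h2 | h2 <;> simp [h1, h2]

lemma sigmaMax_eq_walkSign (hval : ∀ u v, G.Adj u v → sg u v = 1 ∨ sg u v = -1) {u v : V}
    (huv : pairCompatible G sg u v) (p : G.Walk u v) (hp : p.length = G.dist u v) :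
    sigmaMax G sg u v = walkSign sg p := by
  classical
  rcases walkSign_eq_one_or_neg_one hval p with hsign | hsign
  · rw [hsign, sigmaMax, if_pos ⟨p, hp, hsign⟩]
  · rw [hsign, sigmaMax, if_neg]
    rintro ⟨q, hq, hq_sign⟩
    have := huv q p hq hp
    rw [hq_sign, hsign] at this
    norm_num at this

lemma powerGraph.dist_le_mul_length (hconn : G.Connected) {u v : V}
    (P : (powerGraph G n).Walk u v) : G.dist u v ≤ n * P.length := by
  induction P with
  | nil => simp
  | @cons a b c h Q ih =>
    calc G.dist a c ≤ G.dist a b + G.dist b c := hconn.dist_triangle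
      _ ≤ n + n * Q.length := Nat.add_le_add h.2 ih
      _ = n * (Walk.cons h Q).length := by rw [Walk.length_cons]; ring

lemma powerGraph.length_eq_dist_of_mul_length_lt (hconn : G.Connected) {u v : V}
    (P : (powerGraph G n).Walk u v) (hP : n * P.length < G.dist u v + n) :
    P.length = (powerGraph G n).dist u v := by
  obtain ⟨Q, hQ⟩ := (Walk.reachable P).exists_walk_length_eq_dist
  have hQ_dist := powerGraph.dist_le_mul_length hconn Q
  have hP_le : P.length ≤ Q.length := by
    by_contra! hlt
    have : n * (Q.length + 1) ≤ n * P.length := Nat.mul_le_mul_left n hlt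
    rw [Nat.mul_succ] at this
    omega
  exact le_antisymm (hQ ▸ hP_le) (dist_le P)

theorem exists_powerGraph_walk_walkSign_eq (hval : ∀ u v, G.Adj u v → sg u v = 1 ∨ sg u v = -1)
    (hn : 1 ≤ n) (huniq : ∀ u v : V, u ≠ v → G.dist u v ≤ n → pairCompatible G sg u v)
    {u v : V} (p : G.Walk u v) (hp : p.length = G.dist u v) :
    ∃ P : (powerGraph G n).Walk u v,
      walkSign (sigmaMax G sg) P = walkSign sg p ∧ n * P.length < p.length + n := by
  rcases le_or_gt p.length n with hpn | hpn
  · by_cases huv : u = v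
    · subst huv
      obtain rfl : p = Walk.nil :=
        Walk.eq_nil_iff_nil.mpr (Walk.length_eq_zero_iff.mp (by simpa using hp))
      exact ⟨Walk.nil, rfl, by simp; omega⟩
    have hadj : (powerGraph G n).Adj u v := ⟨huv, hp ▸ hpn⟩
    refine ⟨Walk.cons hadj Walk.nil, ?_, ?_⟩
    · rw [walkSign_cons, walkSign_nil, mul_one]
      exact sigmaMax_eq_walkSign hval (huniq u v huv (hp ▸ hpn)) p hp
    · have : p.length ≠ 0 := fun h => huv (Walk.eq_of_length_eq_zero h)
      simp only [Walk.length_cons, Walk.length_nil]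
      omega
  · set x := p.getVert n
    have htake : (p.take n).length = G.dist u x :=
      length_eq_dist_of_subwalk hp (p.isSubwalk_take n)
    have hdist_ux : G.dist u x = n := by rw [← htake]; simp; omega
    have hux : u ≠ x := fun h => by rw [← h, SimpleGraph.dist_self] at hdist_ux; omega
    have hadj : (powerGraph G n).Adj u x := ⟨hux, by omega⟩
    obtain ⟨P, hP_sign, hP_len⟩ := exists_powerGraph_walk_walkSign_eq hval hn huniq (p.drop n)
      (length_eq_dist_of_subwalk hp (p.isSubwalk_drop n))
    refine ⟨Walk.cons hadj P, ?_, ?_⟩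
    · rw [walkSign_cons, hP_sign, sigmaMax_eq_walkSign hval (huniq u x hux (by omega)) _ htake,
        walkSign_take_mul_drop]
    · rw [Walk.drop_length] at hP_len
      rw [Walk.length_cons, Nat.mul_succ]
      omega
termination_by p.length
decreasing_by simp; omega

end

theorem power_compatible_implies_compatible_general {V : Type*} (G : SimpleGraph V) (sg : V → V → ℤ)
    (hconn : G.Connected)
    (hval : ∀ u v, G.Adj u v → sg u v = 1 ∨ sg u v = -1)
    (n : ℕ) (hn : 1 ≤ n)
    (huniq : ∀ u v : V, u ≠ v → G.dist u v ≤ n → pairCompatible G sg u v)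
    (hcomp : ∀ u v : V, pairCompatible (powerGraph G n) (sigmaMax G sg) u v) :
    ∀ u v : V, pairCompatible G sg u v := by
  intro u v p q hp hq
  obtain ⟨P, hP_sign, hP_len⟩ := exists_powerGraph_walk_walkSign_eq hval hn huniq p hp
  obtain ⟨Q, hQ_sign, hQ_len⟩ := exists_powerGraph_walk_walkSign_eq hval hn huniq q hq
  rw [← hP_sign, ← hQ_sign]
  exact hcomp u v P Q (powerGraph.length_eq_dist_of_mul_length_lt hconn P (hp ▸ hP_len))
    (powerGraph.length_eq_dist_of_mul_length_lt hconn Q (hq ▸ hQ_len))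

theorem power_compatible_implies_compatible {V : Type*} [Fintype V] (G : SimpleGraph V) (sg : V → V → ℤ)
    (hconn : G.Connected) (hsym : ∀ u v, sg u v = sg v u)
    (hval : ∀ u v, G.Adj u v → sg u v = 1 ∨ sg u v = -1)
    (n : ℕ) (hn : 1 ≤ n) (hdiam : ∃ u v : V, n < G.dist u v)
    (huniq : ∀ u v : V, u ≠ v → G.dist u v ≤ n → pairCompatible G sg u v)
    (hcomp : ∀ u v : V, pairCompatible (powerGraph G n) (sigmaMax G sg) u v) :
    ∀ u v : V, pairCompatible G sg u v :=
  power_compatible_implies_compatible_general G sg hconn hval n hn huniq hcomp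
end

section
/- Let u and v be an incompatible pair of vertices at minimum distance among all incompatible pairs in a 2-connected non-geodetic signed graph Σ. Then there exist two internally disjoint shortest u–v paths in Σ of opposite signs. -/
open SimpleGraph Polynomial

variable {V : Type*}

/-!
If two shortest `u`–`v` walks of opposite signs met at a vertex `w ∉ {u, v}`, their pieces
`u`–`w` and `w`–`v` would be shortest walks between pairs strictly closer than `u, v`. By
minimality those pairs are compatible, so the two walks would have the same sign. Hence any
two oppositely signed geodesics between a minimal incompatible pair are internally disjoint.
-/

open SimpleGraph.Walk

section

variable {G : SimpleGraph V} {sg : V → V → ℤ} {u v w : V}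

lemma walkSign_append (p : G.Walk u v) (q : G.Walk v w) :
    walkSign sg (p.append q) = walkSign sg p * walkSign sg q := by
  simp [walkSign]

lemma walkSign_eq_one_or_eq_neg_one (hval : ∀ u v, G.Adj u v → sg u v = 1 ∨ sg u v = -1)
    (p : G.Walk u v) : walkSign sg p = 1 ∨ walkSign sg p = -1 :=
  Int.isUnit_iff.mp <| List.prod_isUnit fun _ hx => by
    obtain ⟨d, -, rfl⟩ := List.mem_map.mp hx
    exact Int.isUnit_iff.mpr (hval _ _ d.adj)

lemma exists_walkSign_one_neg_one_of_not_pairCompatible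
    (hval : ∀ u v, G.Adj u v → sg u v = 1 ∨ sg u v = -1) (h : ¬ pairCompatible G sg u v) :
    ∃ p q : G.Walk u v, p.length = G.dist u v ∧ q.length = G.dist u v ∧
      walkSign sg p = 1 ∧ walkSign sg q = -1 := by
  simp only [pairCompatible, not_forall] at h
  obtain ⟨p, q, hp, hq, hne⟩ := h
  rcases walkSign_eq_one_or_eq_neg_one hval p with hp1 | hp1 <;>
    rcases walkSign_eq_one_or_eq_neg_one hval q with hq1 | hq1
  · exact absurd (hp1.trans hq1.symm) hne
  · exact ⟨p, q, hp, hq, hp1, hq1⟩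
  · exact ⟨q, p, hq, hp, hq1, hp1⟩
  · exact absurd (hp1.trans hq1.symm) hne

lemma dist_lt_of_mem_support_of_ne_right {p : G.Walk u v} (hp : p.length = G.dist u v)
    (hw : w ∈ p.support) (hwv : w ≠ v) : G.dist u w < G.dist u v := by
  classical
  rw [← length_eq_dist_of_subwalk hp (p.isSubwalk_takeUntil hw), ← hp]
  exact length_takeUntil_lt_length hw hwv

lemma dist_lt_of_mem_support_of_ne_left {p : G.Walk u v} (hp : p.length = G.dist u v)
    (hw : w ∈ p.support) (hwu : w ≠ u) : G.dist w v < G.dist u v := by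
  classical
  rw [← length_eq_dist_of_subwalk hp (p.isSubwalk_dropUntil hw), ← hp]
  exact length_dropUntil_lt_length hw hwu

lemma walkSign_eq_of_mem_support_of_pairCompatible {p q : G.Walk u v}
    (hp : p.length = G.dist u v) (hq : q.length = G.dist u v)
    (hwp : w ∈ p.support) (hwq : w ∈ q.support)
    (huw : pairCompatible G sg u w) (hwv : pairCompatible G sg w v) :
    walkSign sg p = walkSign sg q := by
  classical
  calc walkSign sg p
      = walkSign sg (p.takeUntil w hwp) * walkSign sg (p.dropUntil w hwp) := by
        rw [← walkSign_append, take_spec]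
    _ = walkSign sg (q.takeUntil w hwq) * walkSign sg (q.dropUntil w hwq) := by
        rw [huw _ _ (length_eq_dist_of_subwalk hp (p.isSubwalk_takeUntil hwp))
            (length_eq_dist_of_subwalk hq (q.isSubwalk_takeUntil hwq)),
          hwv _ _ (length_eq_dist_of_subwalk hp (p.isSubwalk_dropUntil hwp))
            (length_eq_dist_of_subwalk hq (q.isSubwalk_dropUntil hwq))]
    _ = walkSign sg q := by
        rw [← walkSign_append, take_spec]

lemma eq_or_eq_of_mem_support_of_walkSign_ne
    (hmin : ∀ x y : V, ¬ pairCompatible G sg x y → G.dist u v ≤ G.dist x y)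
    {p q : G.Walk u v} (hp : p.length = G.dist u v) (hq : q.length = G.dist u v)
    (hsign : walkSign sg p ≠ walkSign sg q) (hwp : w ∈ p.support) (hwq : w ∈ q.support) :
    w = u ∨ w = v := by
  by_contra! hw
  have compatible_of_lt : ∀ x y, G.dist x y < G.dist u v → pairCompatible G sg x y :=
    fun x y hlt => by_contra fun hc => (hmin x y hc).not_gt hlt
  exact hsign <| walkSign_eq_of_mem_support_of_pairCompatible hp hq hwp hwq
    (compatible_of_lt _ _ (dist_lt_of_mem_support_of_ne_right hp hwp hw.2))
    (compatible_of_lt _ _ (dist_lt_of_mem_support_of_ne_left hp hwp hw.1))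

end

theorem minimal_incompatible_pair_two_disjoint_geodesics_general {V : Type*} (G : SimpleGraph V) (sg : V → V → ℤ)
    (hval : ∀ u v, G.Adj u v → sg u v = 1 ∨ sg u v = -1)
    (u v : V) (huv : ¬ pairCompatible G sg u v)
    (hmin : ∀ x y : V, ¬ pairCompatible G sg x y → G.dist u v ≤ G.dist x y) :
    ∃ p q : G.Walk u v, p.IsPath ∧ q.IsPath ∧
      p.length = G.dist u v ∧ q.length = G.dist u v ∧
      walkSign sg p = 1 ∧ walkSign sg q = -1 ∧
      ∀ w : V, w ∈ p.support → w ∈ q.support → w = u ∨ w = v := by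
  obtain ⟨p, q, hp, hq, hp1, hq1⟩ := exists_walkSign_one_neg_one_of_not_pairCompatible hval huv
  refine ⟨p, q, p.isPath_of_length_eq_dist hp, q.isPath_of_length_eq_dist hq, hp, hq, hp1, hq1,
    fun w hwp hwq => eq_or_eq_of_mem_support_of_walkSign_ne hmin hp hq ?_ hwp hwq⟩
  rw [hp1, hq1]
  decide

theorem minimal_incompatible_pair_two_disjoint_geodesics {V : Type*} [Fintype V] (G : SimpleGraph V) (sg : V → V → ℤ)
    (hconn : G.Connected) (hsym : ∀ u v, sg u v = sg v u)
    (hval : ∀ u v, G.Adj u v → sg u v = 1 ∨ sg u v = -1)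
    (h2 : TwoConnected G)
    (hgeo : ∃ (x y : V) (p q : G.Walk x y), p.IsPath ∧ q.IsPath ∧
      p.length = G.dist x y ∧ q.length = G.dist x y ∧ p ≠ q)
    (u v : V) (huv : ¬ pairCompatible G sg u v)
    (hmin : ∀ x y : V, ¬ pairCompatible G sg x y → G.dist u v ≤ G.dist x y) :
    ∃ p q : G.Walk u v, p.IsPath ∧ q.IsPath ∧
      p.length = G.dist u v ∧ q.length = G.dist u v ∧
      walkSign sg p = 1 ∧ walkSign sg q = -1 ∧
      ∀ w : V, w ∈ p.support → w ∈ q.support → w = u ∨ w = v :=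
  minimal_incompatible_pair_two_disjoint_geodesics_general G sg hval u v huv hmin
end
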